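/- arXiv:1802.07440 — 2 statements merged into one kernel-verified Lean document; each statement's English description precedes it below -/
import Mathlib

section
/- Let H = ([n_H], E_H) be a graph and G the roommates instance constructed from H as described. For every popular matching M in G and every i ∈ [n_H], either (a_i,b_i) ∈ M, or both (a_i,d_i) ∈ M and (b_i,c_i) ∈ M. -/
/-!
Every configuration of the gadget of `i` other than the two claimed ones is beaten by a local
modification of `M` that makes more vertices better off than worse off. If `a_i` is unmatched,
so is `d_i`, and matching them helps both. If `M(a_i) = c_i`, matching `a_i` with `b_i` helps
`a_i` and `b_i` and hurts only `c_i`, unless `b_i` was matched to some `u^e_i`; then matching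
`u^e_i` with `u^e_j` as well helps both of them and hurts at most `b_j`. If `M(a_i) = d_i` and
`(b_i,c_i) ∉ M`, then `c_i` is unmatched, and matching `a_i` with `c_i` helps two vertices and
hurts only `d_i`.
-/

open scoped Classical

/-- A roommates instance: a (finite) graph `(V, adj)` together with a raw preference
relation: `pref u v w` means vertex `u` strictly prefers its neighbor `v` to its
neighbor `w`. -/
structure RoommatesInstance (V : Type) where
  adj : V → V → Prop
  adj_symm : ∀ u v, adj u v → adj v u
  adj_irrefl : ∀ u, ¬ adj u u
  pref : V → V → V → Prop

namespace RoommatesInstance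

variable {V : Type}

/-- The preference relation of each vertex is a strict linear order on its neighbors. -/
def StrictPrefs (G : RoommatesInstance V) : Prop :=
  (∀ u v w, G.pref u v w → G.adj u v ∧ G.adj u w) ∧
  (∀ u v w x, G.pref u v w → G.pref u w x → G.pref u v x) ∧
  (∀ u v w, G.pref u v w → ¬ G.pref u w v) ∧
  (∀ u v w, G.adj u v → G.adj u w → v ≠ w → G.pref u v w ∨ G.pref u w v)

/-- A matching, encoded by the partner function of the corresponding perfect matching
`M̃` of `G̃` (the graph `G` with a self-loop added at every vertex): `m u = u` means
that `u` is unmatched in `M`, i.e. matched to itself along its self-loop in `M̃`. -/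
structure Matching (G : RoommatesInstance V) where
  m : V → V
  invol : ∀ u, m (m u) = u
  adj_of_ne : ∀ u, m u ≠ u → G.adj u (m u)

variable (G : RoommatesInstance V)

/-- `u` considers `v` strictly better than `w`, where each of `v`, `w` is either a
neighbor of `u` or `u` itself (`u` itself stands for being unmatched, which every
vertex ranks below all of its neighbors). -/
def Better (u v w : V) : Prop :=
  (w = u ∧ v ≠ u) ∨ (v ≠ u ∧ w ≠ u ∧ G.pref u v w)

/-- vertex `u` prefers matching `M` to matching `M'` -/
def Prefers (M M' : G.Matching) (u : V) : Prop :=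
  G.Better u (M.m u) (M'.m u)

/-- `φ(M,M')`: the number of vertices preferring `M` to `M'` -/
noncomputable def phi [Fintype V] (M M' : G.Matching) : ℕ :=
  (Finset.univ.filter fun u => G.Prefers M M' u).card

/-- `Δ(M,M') = φ(M,M') - φ(M',M)` -/
noncomputable def delta [Fintype V] (M M' : G.Matching) : ℤ :=
  (G.phi M M' : ℤ) - (G.phi M' M : ℤ)

/-- a matching `M` is popular if it never loses a head-to-head election -/
def Popular [Fintype V] (M : G.Matching) : Prop :=
  ∀ M' : G.Matching, 0 ≤ G.delta M M'

/-- `(u,v)` is a blocking edge to `M`: both endpoints prefer each other to their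
assignments in `M̃`. -/
def Blocks (M : G.Matching) (u v : V) : Prop :=
  G.adj u v ∧ G.Better u v (M.m u) ∧ G.Better v u (M.m v)

/-- `(u,v)` is a negative edge to `M`: both endpoints prefer their assignments in `M̃`
to each other. -/
def Negative (M : G.Matching) (u v : V) : Prop :=
  G.adj u v ∧ G.Better u (M.m u) v ∧ G.Better v (M.m v) u

/-- `cost_M` on the edges of `G̃`: `cost_M(u,v) = 2` for a blocking edge, `-2` for a
negative edge, `0` otherwise; `cost_M(u,u) = 0` if `u` is unmatched in `M` and `-1`
otherwise. -/
noncomputable def cost (M : G.Matching) (u v : V) : ℤ :=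
  if u = v then (if M.m u = u then 0 else -1)
  else if G.Blocks M u v then 2
  else if G.Negative M u v then -2
  else 0

/-- a stable matching: no blocking edge -/
def Stable (M : G.Matching) : Prop := ∀ u v, ¬ G.Blocks M u v

/-- the number of edges of a matching -/
noncomputable def msize [Fintype V] (M : G.Matching) : ℕ :=
  (Finset.univ.filter fun u => M.m u ≠ u).card / 2

theorem cost_comm (M : G.Matching) (u v : V) : G.cost M u v = G.cost M v u := by
  unfold cost
  rcases eq_or_ne u v with rfl | huv
  · rfl
  · rw [if_neg huv, if_neg (Ne.symm huv)]
    have hb : G.Blocks M u v ↔ G.Blocks M v u :=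
      ⟨fun ⟨h1, h2, h3⟩ => ⟨G.adj_symm _ _ h1, h3, h2⟩,
       fun ⟨h1, h2, h3⟩ => ⟨G.adj_symm _ _ h1, h3, h2⟩⟩
    have hn : G.Negative M u v ↔ G.Negative M v u :=
      ⟨fun ⟨h1, h2, h3⟩ => ⟨G.adj_symm _ _ h1, h3, h2⟩,
       fun ⟨h1, h2, h3⟩ => ⟨G.adj_symm _ _ h1, h3, h2⟩⟩
    simp only [hb, hn]

end RoommatesInstance

/-! ## The roommates instance `G` constructed from a vertex-cover instance `H` -/

/-- The vertex set of the roommates instance `G` built from a graph `H` on `Fin n`: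
vertices `a_i, b_i, c_i, d_i` for every vertex `i` of `H`, and a vertex
`u^e_i = U i j` for every edge `e = (i,j)` of `H` (so `U i j` is the vertex of the
edge `{i,j}` associated with endpoint `i`; for non-adjacent pairs `(i,j)` the vertex
`U i j` is isolated, hence irrelevant). -/
inductive GV (n : ℕ) where
  | A (i : Fin n) | B (i : Fin n) | C (i : Fin n) | D (i : Fin n) | U (i j : Fin n)
  deriving DecidableEq, Fintype

variable {n : ℕ}

/-- The edges of `G` (listed in one direction each):
`a_i` is adjacent to `b_i, c_i, d_i`; `b_i` is adjacent to `c_i` and to `u^e_i` for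
every edge `e` of `H` incident to `i`; and `u^e_i` is adjacent to `u^e_j` for every
edge `e = (i,j)` of `H`. -/
def grel (H : SimpleGraph (Fin n)) : GV n → GV n → Prop := fun x y =>
  (∃ i, x = GV.A i ∧ (y = GV.B i ∨ y = GV.C i ∨ y = GV.D i)) ∨
  (∃ i, x = GV.B i ∧ y = GV.C i) ∨
  (∃ i j, x = GV.B i ∧ y = GV.U i j ∧ H.Adj i j) ∨
  (∃ i j, x = GV.U i j ∧ y = GV.U j i ∧ H.Adj i j)

/-- Ranks encoding the preference lists of `G` (lower rank = more preferred):
`a_i : b_i ≻ c_i ≻ d_i`;  `b_i : a_i ≻ u^{e_1}_i ≻ ⋯ ≻ u^{e_k}_i ≻ c_i`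
(the `u^e_i`'s ordered by the index of the other endpoint of `e`);
`c_i : a_i ≻ b_i`;  `d_i : a_i`;  `u^e_i : u^e_j ≻ b_i`. -/
def grank : GV n → GV n → ℕ := fun x y =>
  match x, y with
  | GV.A _, GV.B _ => 0
  | GV.A _, GV.C _ => 1
  | GV.A _, GV.D _ => 2
  | GV.B _, GV.A _ => 0
  | GV.B _, GV.U _ k => 1 + k.val
  | GV.B _, GV.C _ => 1 + n
  | GV.C _, GV.A _ => 0
  | GV.C _, GV.B _ => 1
  | GV.D _, GV.A _ => 0
  | GV.U _ _, GV.U _ _ => 0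
  | GV.U _ _, GV.B _ => 1
  | _, _ => 0

/-- The roommates instance `G` constructed from the vertex cover instance `H`. -/
def GofH (H : SimpleGraph (Fin n)) : RoommatesInstance (GV n) where
  adj x y := x ≠ y ∧ (grel H x y ∨ grel H y x)
  adj_symm := fun _ _ h => ⟨h.1.symm, h.2.symm⟩
  adj_irrefl := fun _ h => h.1 rfl
  pref u v w :=
    (u ≠ v ∧ (grel H u v ∨ grel H v u)) ∧ (u ≠ w ∧ (grel H u w ∨ grel H w u)) ∧
      grank u v < grank u w

namespace RoommatesInstance

variable {V : Type} {G : RoommatesInstance V}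

theorem ne_of_adj {u v : V} (h : G.adj u v) : u ≠ v := fun huv => G.adj_irrefl u (huv ▸ h)

theorem Matching.eq_symm (M : G.Matching) {x y : V} (h : M.m x = y) : M.m y = x := by
  rw [← h, M.invol]

/-- Match `u` with `v`, leaving their former partners unmatched. -/
noncomputable def Matching.addEdge (M : G.Matching) (u v : V) (huv : G.adj u v) : G.Matching where
  m x := if x = u then v else if x = v then u else if M.m x = u ∨ M.m x = v then x else M.m x
  invol x := by
    have hvu := (G.ne_of_adj huv).symm
    by_cases hxu : x = u
    · simp [hxu, hvu]
    by_cases hxv : x = v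
    · simp [hxv, hvu]
    by_cases hMx : M.m x = u ∨ M.m x = v
    · simp [hxu, hxv, hMx]
    · obtain ⟨hMxu, hMxv⟩ := not_or.mp hMx
      simp [hxu, hxv, hMxu, hMxv, M.invol]
  adj_of_ne x hx := by
    have hvu := (G.ne_of_adj huv).symm
    by_cases hxu : x = u
    · simpa [hxu] using huv
    by_cases hxv : x = v
    · simpa [hxv, hvu] using G.adj_symm _ _ huv
    by_cases hMx : M.m x = u ∨ M.m x = v
    · simp [hxu, hxv, hMx] at hx
    · simp only [hxu, hxv, hMx, if_false] at hx ⊢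
      exact M.adj_of_ne x hx

namespace Matching

variable (M : G.Matching) {u v : V} (huv : G.adj u v)

@[simp]
theorem addEdge_left : (M.addEdge u v huv).m u = v := if_pos rfl

@[simp]
theorem addEdge_right : (M.addEdge u v huv).m v = u := by
  simp [addEdge, (G.ne_of_adj huv).symm]

theorem addEdge_of_ne {x : V} (hu : x ≠ u) (hv : x ≠ v) (hMu : x ≠ M.m u) (hMv : x ≠ M.m v) :
    (M.addEdge u v huv).m x = M.m x := by
  have hMx : ¬ (M.m x = u ∨ M.m x = v) := by
    rintro (h | h)
    · exact hMu (M.eq_symm h).symm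
    · exact hMv (M.eq_symm h).symm
  simp [addEdge, hu, hv, hMx]

theorem addEdge_partner {x : V} (hu : x ≠ u) (hv : x ≠ v) (hM : x = M.m u ∨ x = M.m v) :
    (M.addEdge u v huv).m x = x := by
  rcases hM with rfl | rfl <;> simp [addEdge, hu, hv, M.invol]

end Matching

theorem better_self_right {u v : V} (hv : v ≠ u) : G.Better u v u := Or.inl ⟨rfl, hv⟩

theorem Better.asymm (hasymm : ∀ u v w, G.pref u v w → ¬ G.pref u w v) {u v w : V}
    (h : G.Better u v w) : ¬ G.Better u w v := by
  rcases h with ⟨hwu, hvu⟩ | ⟨hvu, -, hp⟩ <;> rintro (⟨hvu', -⟩ | ⟨hwu', -, hp'⟩)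
  · exact hvu hvu'
  · exact hwu' hwu
  · exact hvu hvu'
  · exact hasymm _ _ _ hp hp'

theorem not_popular_of_card_lt [Fintype V] (hasymm : ∀ u v w, G.pref u v w → ¬ G.pref u w v)
    {M : G.Matching} (M' : G.Matching) (W L : Finset V) (hW : ∀ u ∈ W, G.Prefers M' M u)
    (hM' : ∀ u, u ∉ W → u ∉ L → M'.m u = M.m u) (hcard : L.card < W.card) :
    ¬ G.Popular M := by
  intro hM
  have hle : G.phi M M' ≤ L.card := by
    refine Finset.card_le_card fun u hu => ?_
    by_contra huL
    have hpref : G.Better u (M.m u) (M'.m u) := (Finset.mem_filter.mp hu).2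
    by_cases huW : u ∈ W
    · exact hpref.asymm hasymm (hW u huW)
    · rw [hM' u huW huL] at hpref
      exact hpref.asymm hasymm hpref
  have hge : W.card ≤ G.phi M' M :=
    Finset.card_le_card fun u hu => Finset.mem_filter.mpr ⟨Finset.mem_univ u, hW u hu⟩
  have := hM M'
  unfold delta at this
  omega

end RoommatesInstance

namespace GofH

open RoommatesInstance Matching

variable {H : SimpleGraph (Fin n)} {i j : Fin n} {x : GV n}

theorem pref_asymm (u v w : GV n) : (GofH H).pref u v w → ¬ (GofH H).pref u w v :=
  fun h h' => lt_asymm h.2.2 h'.2.2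

theorem adj_A_cases (h : (GofH H).adj (GV.A i) x) : x = GV.B i ∨ x = GV.C i ∨ x = GV.D i := by
  obtain ⟨-, h | h⟩ := h <;> simp only [grel] at h <;> aesop

theorem adj_B_cases (h : (GofH H).adj (GV.B i) x) :
    x = GV.A i ∨ x = GV.C i ∨ ∃ j, x = GV.U i j ∧ H.Adj i j := by
  obtain ⟨-, h | h⟩ := h <;> simp only [grel] at h <;> aesop

theorem adj_C_cases (h : (GofH H).adj (GV.C i) x) : x = GV.A i ∨ x = GV.B i := by
  obtain ⟨-, h | h⟩ := h <;> simp only [grel] at h <;> aesop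

theorem eq_A_of_adj_D (h : (GofH H).adj (GV.D i) x) : x = GV.A i := by
  obtain ⟨-, h | h⟩ := h <;> simp only [grel] at h <;> aesop

theorem adj_U_cases (h : (GofH H).adj (GV.U i j) x) : x = GV.U j i ∨ x = GV.B i := by
  obtain ⟨-, h | h⟩ := h <;> simp only [grel] at h <;> aesop

variable {M : (GofH H).Matching}

theorem partner_A_ne_self (hM : (GofH H).Popular M) : M.m (GV.A i) ≠ GV.A i := by
  intro hA
  have hD : M.m (GV.D i) = GV.D i := by
    by_contra hD
    have := M.eq_symm (eq_A_of_adj_D (M.adj_of_ne _ hD))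
    simp [hA] at this
  have hAD : (GofH H).adj (GV.A i) (GV.D i) := by simp [GofH, grel]
  refine not_popular_of_card_lt pref_asymm (M.addEdge _ _ hAD) {GV.A i, GV.D i} ∅ ?_ ?_ ?_ hM
  · simp [Prefers, hA, hD, better_self_right]
  · intro u hW _
    simp only [Finset.mem_insert, Finset.mem_singleton, not_or] at hW
    exact addEdge_of_ne _ _ hW.1 hW.2 (by rw [hA]; exact hW.1) (by rw [hD]; exact hW.2)
  · simp

theorem partner_B_ne_self_of_partner_A_eq_C (hM : (GofH H).Popular M)
    (hA : M.m (GV.A i) = GV.C i) : M.m (GV.B i) ≠ GV.B i := by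
  intro hB
  have hAB : (GofH H).adj (GV.A i) (GV.B i) := by simp [GofH, grel]
  refine not_popular_of_card_lt pref_asymm (M.addEdge _ _ hAB) {GV.A i, GV.B i} {GV.C i}
    ?_ ?_ ?_ hM
  · simp only [Finset.mem_insert, Finset.mem_singleton, forall_eq_or_imp, forall_eq, Prefers,
      addEdge_left, addEdge_right, hA, hB]
    simp [Better, GofH, grel, grank]
  · intro u hW hL
    simp only [Finset.mem_insert, Finset.mem_singleton, not_or] at hW hL
    exact addEdge_of_ne _ _ hW.1 hW.2 (by rw [hA]; exact hL) (by rw [hB]; exact hW.2)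
  · simp

theorem partner_C_ne_self_of_partner_A_eq_D (hM : (GofH H).Popular M)
    (hA : M.m (GV.A i) = GV.D i) : M.m (GV.C i) ≠ GV.C i := by
  intro hC
  have hAC : (GofH H).adj (GV.A i) (GV.C i) := by simp [GofH, grel]
  refine not_popular_of_card_lt pref_asymm (M.addEdge _ _ hAC) {GV.A i, GV.C i} {GV.D i}
    ?_ ?_ ?_ hM
  · simp only [Finset.mem_insert, Finset.mem_singleton, forall_eq_or_imp, forall_eq, Prefers,
      addEdge_left, addEdge_right, hA, hC]
    simp [Better, GofH, grel, grank]
  · intro u hW hL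
    simp only [Finset.mem_insert, Finset.mem_singleton, not_or] at hW hL
    exact addEdge_of_ne _ _ hW.1 hW.2 (by rw [hA]; exact hL) (by rw [hC]; exact hW.2)
  · simp

theorem not_popular_of_partner_A_eq_C_of_partner_B_eq_U (hA : M.m (GV.A i) = GV.C i)
    (hB : M.m (GV.B i) = GV.U i j) (hij : H.Adj i j)
    (hU : M.m (GV.U j i) = GV.U j i ∨ M.m (GV.U j i) = GV.B j) : ¬ (GofH H).Popular M := by
  have hAB : (GofH H).adj (GV.A i) (GV.B i) := by simp [GofH, grel]
  have hUU : (GofH H).adj (GV.U i j) (GV.U j i) := by simp [GofH, grel, hij, hij.ne]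
  have hU_ne : ∀ x, x ≠ GV.U j i → x ≠ GV.B j → x ≠ M.m (GV.U j i) := by
    intro x h₁ h₂
    rcases hU with hU | hU <;> rwa [hU]
  set M₁ := M.addEdge _ _ hAB
  have hM₁U : M₁.m (GV.U i j) = GV.U i j :=
    addEdge_partner _ _ (by simp) (by simp) (Or.inr hB.symm)
  have hM₁U' : M₁.m (GV.U j i) = M.m (GV.U j i) :=
    addEdge_of_ne _ _ (by simp) (by simp) (by simp [hA]) (by simp [hB, hij.ne'])
  have hM₁_ne : ∀ x, x ≠ GV.U i j → x ≠ GV.U j i → x ≠ GV.B j →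
      (M₁.addEdge _ _ hUU).m x = M₁.m x := fun x h₁ h₂ h₃ =>
    addEdge_of_ne _ _ h₁ h₂ (by rwa [hM₁U]) (by rw [hM₁U']; exact hU_ne x h₂ h₃)
  refine not_popular_of_card_lt pref_asymm (M₁.addEdge _ _ hUU)
    {GV.A i, GV.B i, GV.U i j, GV.U j i} {GV.C i, GV.B j} ?_ ?_ ?_
  · simp only [Finset.mem_insert, Finset.mem_singleton, forall_eq_or_imp, forall_eq, Prefers,
      addEdge_left, addEdge_right, hM₁_ne (GV.A i) (by simp) (by simp) (by simp),
      hM₁_ne (GV.B i) (by simp) (by simp) (by simp [hij.ne]), M₁, hA, hB, M.eq_symm hB]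
    refine ⟨by simp [Better, GofH, grel, grank], by simp [Better, GofH, grel, grank, hij],
      by simp [Better, GofH, grel, grank, hij, hij.ne], ?_⟩
    rcases hU with hU | hU <;> simp [hU, Better, GofH, grel, grank, hij.symm, hij.ne]
  · intro u hW hL
    simp only [Finset.mem_insert, Finset.mem_singleton, not_or] at hW hL
    rw [hM₁_ne u hW.2.2.1 hW.2.2.2 hL.2]
    exact addEdge_of_ne _ _ hW.1 hW.2.1 (by rw [hA]; exact hL.1) (by rw [hB]; exact hW.2.2.1)
  · exact Finset.card_le_two.trans_lt (by simp [hij.ne])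

theorem partner_A_ne_C (hM : (GofH H).Popular M) : M.m (GV.A i) ≠ GV.C i := by
  intro hA
  have hCA := M.eq_symm hA
  rcases adj_B_cases (M.adj_of_ne _ (partner_B_ne_self_of_partner_A_eq_C hM hA)) with
    hB | hB | ⟨j, hB, hij⟩
  · simp [M.eq_symm hB] at hA
  · simp [M.eq_symm hB] at hCA
  refine not_popular_of_partner_A_eq_C_of_partner_B_eq_U hA hB hij ?_ hM
  by_contra! hU
  rcases adj_U_cases (M.adj_of_ne _ hU.1) with hU' | hU'
  · simpa [M.eq_symm hB] using M.eq_symm hU'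
  · exact hU.2 hU'

theorem partner_B_eq_C_of_partner_A_eq_D (hM : (GofH H).Popular M)
    (hA : M.m (GV.A i) = GV.D i) : M.m (GV.B i) = GV.C i := by
  by_contra hB
  apply partner_C_ne_self_of_partner_A_eq_D hM hA
  by_contra hC
  rcases adj_C_cases (M.adj_of_ne _ hC) with hC' | hC'
  · simp [M.eq_symm hC'] at hA
  · exact hB (M.eq_symm hC')

end GofH

open RoommatesInstance in
/-- For every popular matching `M` in `G` and every vertex `i` of
`H`: either `(a_i,b_i) ∈ M`, or both `(a_i,d_i) ∈ M` and `(b_i,c_i) ∈ M`. -/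
theorem popular_structure_on_gadget {n : ℕ} (H : SimpleGraph (Fin n))
    (M : (GofH H).Matching) (hM : (GofH H).Popular M) (i : Fin n) :
    M.m (GV.A i) = GV.B i ∨ (M.m (GV.A i) = GV.D i ∧ M.m (GV.B i) = GV.C i) := by
  rcases GofH.adj_A_cases (M.adj_of_ne _ (GofH.partner_A_ne_self hM)) with hB | hC | hD
  · exact Or.inl hB
  · exact absurd hC (GofH.partner_A_ne_C hM)
  · exact Or.inr ⟨hD, GofH.partner_B_eq_C_of_partner_A_eq_D hM hD⟩
end

section
/- Let G = (A ∪ B, E) be a bipartite instance with strict preference lists, M a popular matching in G, and α ∈ {0,±1}^{A∪B} a witness of M. Then for every popular edge (a,b) ∈ E, the integers α_a and α_b have the same parity. -/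
open scoped Classical

namespace RoommatesInstance

variable {V : Type} (G : RoommatesInstance V)

/-- A witness of the popularity of `M`: an optimal dual solution, i.e. a vector `α`
with `Σ_u α_u = 0`, `α_u + α_v ≥ cost_M(u,v)` for every edge `(u,v)` and
`α_u ≥ cost_M(u,u)` for every vertex `u`. -/
def IsWitness [Fintype V] (M : G.Matching) (α : V → ℝ) : Prop :=
  (∑ u, α u) = 0 ∧
  (∀ u v, G.adj u v → (G.cost M u v : ℝ) ≤ α u + α v) ∧
  (∀ u, (G.cost M u u : ℝ) ≤ α u)

/-- `(u,v)` is a popular edge: it belongs to some popular matching of `G`. -/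
def PopularEdge [Fintype V] (u v : V) : Prop :=
  u ≠ v ∧ ∃ N : G.Matching, G.Popular N ∧ N.m u = v

/-- `u` is an unstable vertex: it is left unmatched in some stable matching of `G`. -/
def Unstable (u : V) : Prop :=
  ∃ S : G.Matching, G.Stable S ∧ S.m u = u

/-- `u` and `v` lie in the same connected component of the popular subgraph `F_G`
(the subgraph of `G` on the popular edges). -/
def PopConn [Fintype V] : V → V → Prop :=
  Relation.ReflTransGen (G.PopularEdge)

end RoommatesInstance

namespace RoommatesInstance

variable {V : Type} {G : RoommatesInstance V}

lemma better_irrefl' (hG : G.StrictPrefs) (u x : V) : ¬ G.Better u x x := by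
  rintro (⟨h1, h2⟩ | ⟨h1, h2, h3⟩)
  · exact h2 h1
  · exact hG.2.2.1 _ _ _ h3 h3

lemma better_asymm' (hG : G.StrictPrefs) {u x y : V} (h : G.Better u x y) :
    ¬ G.Better u y x := by
  rintro (⟨g1, g2⟩ | ⟨g1, g2, g3⟩)
  · rcases h with ⟨h1, h2⟩ | ⟨h1, h2, h3⟩
    · exact h2 g1
    · exact h1 g1
  · rcases h with ⟨h1, h2⟩ | ⟨h1, h2, h3⟩
    · exact g1 h1
    · exact hG.2.2.1 _ _ _ h3 g3

lemma better_total' (hG : G.StrictPrefs) (M : G.Matching) {u v : V}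
    (hadj : G.adj u v) :
    G.Better u v (M.m u) ∨ G.Better u (M.m u) v ∨ M.m u = v := by
  have hvu : v ≠ u := fun h => G.adj_irrefl u (h ▸ hadj)
  by_cases hm : M.m u = u
  · exact Or.inl (Or.inl ⟨hm, hvu⟩)
  · by_cases he : M.m u = v
    · exact Or.inr (Or.inr he)
    · rcases hG.2.2.2 u v (M.m u) hadj (M.adj_of_ne u hm)
        (fun h => he h.symm) with h | h
      · exact Or.inl (Or.inr ⟨hvu, hm, h⟩)
      · exact Or.inr (Or.inl (Or.inr ⟨hm, hvu, h⟩))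

/-- the (real-valued) vote of vertex `u` in the election between `N` and `M` -/
noncomputable def vote (G : RoommatesInstance V) (M N : G.Matching) (u : V) : ℝ :=
  (if G.Prefers N M u then 1 else 0) - (if G.Prefers M N u then 1 else 0)

/-- For a matched pair `(a,b)` of `N`, the sum of the votes of `a` and `b`
equals `cost_M(a,b)`. -/
lemma vote_pair_eq_cost (hG : G.StrictPrefs) (M N : G.Matching) {a b : V}
    (hNa : N.m a = b) (hne : a ≠ b) :
    G.vote M N a + G.vote M N b = (G.cost M a b : ℝ) := by
  have hNb : N.m b = a := by rw [← hNa]; exact N.invol a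
  have hadj : G.adj a b := by
    have := N.adj_of_ne a (by rw [hNa]; exact Ne.symm hne)
    rwa [hNa] at this
  have hMab : M.m a = b → M.m b = a := fun h => by rw [← h]; exact M.invol a
  have hMba : M.m b = a → M.m a = b := fun h => by rw [← h]; exact M.invol b
  unfold vote Prefers cost
  rw [hNa, hNb, if_neg hne]
  by_cases hb : G.Blocks M a b
  · rw [if_pos hb]
    obtain ⟨-, p1, p2⟩ := hb
    rw [if_pos p1, if_pos p2, if_neg (better_asymm' hG p1),
      if_neg (better_asymm' hG p2)]
    norm_num
  · rw [if_neg hb]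
    by_cases hn : G.Negative M a b
    · rw [if_pos hn]
      obtain ⟨-, q1, q2⟩ := hn
      rw [if_pos q1, if_pos q2, if_neg (better_asymm' hG q1),
        if_neg (better_asymm' hG q2)]
      norm_num
    · rw [if_neg hn]
      by_cases hma : M.m a = b
      · have hmb : M.m b = a := hMab hma
        have e1 : ¬ G.Better a b (M.m a) := by rw [hma]; exact better_irrefl' hG a b
        have e2 : ¬ G.Better a (M.m a) b := by rw [hma]; exact better_irrefl' hG a b
        have e3 : ¬ G.Better b a (M.m b) := by rw [hmb]; exact better_irrefl' hG b a
        have e4 : ¬ G.Better b (M.m b) a := by rw [hmb]; exact better_irrefl' hG b a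
        rw [if_neg e1, if_neg e2, if_neg e3, if_neg e4]
        norm_num
      · have hmb : M.m b ≠ a := fun h => hma (hMba h)
        have h1 : G.Better a b (M.m a) ∨ G.Better a (M.m a) b := by
          rcases better_total' hG M hadj with h | h | h
          · exact Or.inl h
          · exact Or.inr h
          · exact absurd h hma
        have h2 : G.Better b a (M.m b) ∨ G.Better b (M.m b) a := by
          rcases better_total' hG M (G.adj_symm _ _ hadj) with h | h | h
          · exact Or.inl h
          · exact Or.inr h
          · exact absurd h hmb
        rcases h1 with h1 | h1 <;> rcases h2 with h2 | h2
        · exact absurd ⟨hadj, h1, h2⟩ hb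
        · rw [if_pos h1, if_pos h2, if_neg (better_asymm' hG h1),
            if_neg (better_asymm' hG h2)]
          norm_num
        · rw [if_pos h1, if_pos h2, if_neg (better_asymm' hG h1),
            if_neg (better_asymm' hG h2)]
          norm_num
        · exact absurd ⟨hadj, h1, h2⟩ hn

/-- An unmatched vertex's vote equals `cost_M(u,u)`. -/
lemma vote_self_eq_cost (hG : G.StrictPrefs) (M N : G.Matching) {u : V}
    (h : N.m u = u) : G.vote M N u = (G.cost M u u : ℝ) := by
  unfold vote Prefers cost
  rw [h, if_pos rfl]
  have e1 : ¬ G.Better u u (M.m u) := by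
    rintro (⟨_, h2⟩ | ⟨h2, _⟩) <;> exact h2 rfl
  rw [if_neg e1]
  by_cases hm : M.m u = u
  · have e2 : ¬ G.Better u (M.m u) u := by rw [hm]; exact better_irrefl' hG u u
    rw [if_neg e2, if_pos hm]
    norm_num
  · have e2 : G.Better u (M.m u) u := Or.inl ⟨rfl, hm⟩
    rw [if_pos e2, if_neg hm]
    norm_num

lemma vote_key_ineq [Fintype V] (hG : G.StrictPrefs) (M N : G.Matching)
    (α : V → ℝ) (hα : G.IsWitness M α) (u : V) :
    G.vote M N u + G.vote M N (N.m u) ≤ α u + α (N.m u) := by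
  by_cases hu : N.m u = u
  · rw [hu]
    have h1 := vote_self_eq_cost hG M N hu
    have h2 := hα.2.2 u
    linarith
  · have h1 := vote_pair_eq_cost hG M N (rfl : N.m u = N.m u)
      (fun h => hu h.symm)
    have h2 := hα.2.1 u (N.m u) (N.adj_of_ne u hu)
    linarith

lemma sum_vote_eq_delta [Fintype V] (M N : G.Matching) :
    ∑ u, G.vote M N u = (G.delta N M : ℝ) := by
  unfold vote delta phi
  rw [Finset.sum_sub_distrib]
  push_cast
  rw [Finset.sum_boole, Finset.sum_boole]

end RoommatesInstance

open RoommatesInstance in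
/-- Let `M` be a popular matching of a bipartite instance `G` and
`α ∈ {0,±1}^{A∪B}` a witness of `M`.  Then for every popular edge `(a,b)`, `α_a` and
`α_b` have the same parity (given `α ∈ {0,±1}^{A∪B}`: `α_a = 0` iff `α_b = 0`). -/
theorem witness_same_parity_on_popular_edge {V : Type} [Fintype V]
    (G : RoommatesInstance V) (hG : G.StrictPrefs)
    (A : Set V) (hbip : ∀ u v, G.adj u v → (u ∈ A ↔ v ∉ A))
    (M : G.Matching) (hM : G.Popular M)
    (α : V → ℝ) (hα : G.IsWitness M α)
    (h01 : ∀ u, α u = 0 ∨ α u = 1 ∨ α u = -1)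
    (a b : V) (hab : G.PopularEdge a b) :
    (α a = 0 ↔ α b = 0) := by
  obtain ⟨hne, N, hNpop, hNa⟩ := hab
  -- the involution of N as a permutation
  have hinv : Function.Involutive N.m := N.invol
  have hperm : ∀ f : V → ℝ, ∑ u, f (N.m u) = ∑ u, f u := by
    intro f
    exact Fintype.sum_bijective N.m hinv.bijective _ _ (fun u => rfl)
  have hsumα : ∑ u, (α u + α (N.m u)) = 0 := by
    rw [Finset.sum_add_distrib, hperm, hα.1]; ring
  have hsumv : ∑ u, (G.vote M N u + G.vote M N (N.m u)) = 2 * (G.delta N M : ℝ) := by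
    rw [Finset.sum_add_distrib, hperm, sum_vote_eq_delta]; ring
  have hdNM : (0 : ℝ) ≤ (G.delta N M : ℝ) := by exact_mod_cast hNpop M
  have hle : ∀ u ∈ Finset.univ, G.vote M N u + G.vote M N (N.m u) ≤ α u + α (N.m u) :=
    fun u _ => vote_key_ineq hG M N α hα u
  have hsums_eq : ∑ u, (G.vote M N u + G.vote M N (N.m u))
      = ∑ u, (α u + α (N.m u)) := by
    have h1 := Finset.sum_le_sum hle
    rw [hsumα, hsumv] at h1 ⊢
    linarith
  have hpt : G.vote M N a + G.vote M N (N.m a) = α a + α (N.m a) := by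
    by_contra hcon
    have hlt : G.vote M N a + G.vote M N (N.m a) < α a + α (N.m a) :=
      lt_of_le_of_ne (hle a (Finset.mem_univ a)) hcon
    have hstrict := Finset.sum_lt_sum hle ⟨a, Finset.mem_univ a, hlt⟩
    exact absurd hsums_eq (ne_of_lt hstrict)
  rw [hNa] at hpt
  have hvc := vote_pair_eq_cost hG M N hNa hne
  have hkey : α a + α b = (G.cost M a b : ℝ) := by linarith
  have hcost : G.cost M a b = -2 ∨ G.cost M a b = 0 ∨ G.cost M a b = 2 := by
    unfold cost
    rw [if_neg hne]
    split_ifs <;> simp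
  have hkey' : α a + α b = -2 ∨ α a + α b = 0 ∨ α a + α b = 2 := by
    rcases hcost with h | h | h <;> rw [h] at hkey <;> push_cast at hkey <;>
      simp [hkey]
  rcases h01 a with ha | ha | ha <;> rcases h01 b with hb | hb | hb <;>
    rw [ha, hb] <;> rw [ha, hb] at hkey' <;> norm_num at *
end
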